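/- arXiv:2406.06741 — 2 statements merged into one kernel-verified Lean document; each statement's English description precedes it below -/
import Mathlib

section
/- For every finite set Q of primes ≥ 7 and every function γ : Q → {0,1}, there exists a prime p ≥ 13 with p⁴ - 1 ≡ a_{q,γ(q)} (mod q) for all q ∈ Q, where a_{q,0} = 0 and a_{q,1} = c - 1 for c a nontrivial fourth power mod q. -/
lemma fin_two_cases (i : Fin 2) : i = 0 ∨ i = 1 := by
  fin_cases i
  · exact Or.inl rfl
  · exact Or.inr rfl

lemma exists_unit_pow_four_ne_one (q : ℕ) (hq : Nat.Prime q) (hq7 : 7 ≤ q) :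
    ∃ d : (ZMod q)ˣ, d ^ 4 ≠ 1 := by
  haveI : Fact (Nat.Prime q) := ⟨hq⟩
  obtain ⟨g, hg⟩ := IsCyclic.exists_generator (α := (ZMod q)ˣ)
  refine ⟨g, fun h => ?_⟩
  have hord : orderOf g = q - 1 := by
    rw [orderOf_eq_card_of_forall_mem_zpowers hg, Nat.card_eq_fintype_card,
      ZMod.card_units_eq_totient, Nat.totient_prime hq]
  have hdvd : orderOf g ∣ 4 := orderOf_dvd_of_pow_eq_one h
  rw [hord] at hdvd
  have := Nat.le_of_dvd (by norm_num) hdvd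
  omega

/-- For every prime `q ≥ 7` there are residues `a q 0 ≠ a q 1` in `{0, …, q-2}`,
with `a q 0 = 0` and `a q 1 = c - 1` for `c` a nontrivial fourth power mod `q`,
such that for every finite set `Q` of primes `≥ 7` and every `γ : Q → {0,1}`
there is a prime `p ≥ 13` with `p⁴ - 1 ≡ a q (γ q) (mod q)` for all `q ∈ Q`. -/
theorem exists_residues_dirichlet :
    ∃ a : ℕ → Fin 2 → ℕ,
      (∀ q : ℕ, Nat.Prime q → 7 ≤ q →
        a q 0 ≤ q - 2 ∧ a q 1 ≤ q - 2 ∧ a q 0 ≠ a q 1 ∧ a q 0 = 0 ∧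
          ∃ d : (ZMod q)ˣ, d ^ 4 ≠ 1 ∧ (a q 1 : ZMod q) = ((d ^ 4 : (ZMod q)ˣ) : ZMod q) - 1) ∧
      ∀ Q : Finset ℕ, (∀ q ∈ Q, Nat.Prime q ∧ 7 ≤ q) → ∀ γ : ℕ → Fin 2,
        ∃ p : ℕ, Nat.Prime p ∧ 13 ≤ p ∧
          ∀ q ∈ Q, ((p : ZMod q) ^ 4 - 1 = (a q (γ q) : ZMod q)) := by
  classical
  have hd : ∀ q : ℕ, Nat.Prime q ∧ 7 ≤ q → ∃ d : (ZMod q)ˣ, d ^ 4 ≠ 1 :=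
    fun q h => exists_unit_pow_four_ne_one q h.1 h.2
  choose d hd4 using hd
  refine ⟨fun q i => if h : Nat.Prime q ∧ 7 ≤ q then
      (if i = 0 then 0 else ((((d q h) ^ 4 : (ZMod q)ˣ) : ZMod q) - 1).val) else 0, ?_, ?_⟩
  · intro q hq hq7
    have h : Nat.Prime q ∧ 7 ≤ q := ⟨hq, hq7⟩
    haveI : Fact (Nat.Prime q) := ⟨hq⟩
    haveI : NeZero q := ⟨hq.pos.ne'⟩
    set e : ZMod q := (((d q h) ^ 4 : (ZMod q)ˣ) : ZMod q) with he
    have hlt : (e - 1).val < q := ZMod.val_lt _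
    have hne1 : e ≠ 1 := fun hh => hd4 q h (Units.ext (by simpa [he] using hh))
    have hne : (e - 1).val ≠ q - 1 := by
      intro hv
      have hv2 : e - 1 = ((q - 1 : ℕ) : ZMod q) := by
        rw [← hv, ZMod.natCast_val, ZMod.cast_id]
      have hq1 : ((q - 1 : ℕ) : ZMod q) = -1 := by
        rw [Nat.cast_sub (by omega : 1 ≤ q), ZMod.natCast_self, Nat.cast_one]
        ring
      have : (e - 1) = (-1 : ZMod q) := by rw [hv2, hq1]
      have he0 : e = 0 := by linear_combination this
      exact ((d q h) ^ 4).ne_zero (by simp [he] at he0)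
    have hv0 : (e - 1).val ≠ 0 := by
      simp only [ne_eq, ZMod.val_eq_zero, sub_eq_zero]
      exact hne1
    refine ⟨by simp [h], ?_, ?_, by simp [h], d q h, hd4 q h, ?_⟩
    · simp only [dif_pos h, if_neg (by decide : (1 : Fin 2) ≠ 0)]
      show (e - 1).val ≤ q - 2
      omega
    · simp only [dif_pos h, if_pos rfl, if_neg (by decide : (1 : Fin 2) ≠ 0)]
      show (0 : ℕ) ≠ (e - 1).val
      exact fun hh => hv0 hh.symm
    · simp only [dif_pos h, if_neg (by decide : (1 : Fin 2) ≠ 0)]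
      show (((e - 1).val : ℕ) : ZMod q) = e - 1
      simp [ZMod.natCast_val, ZMod.cast_id]
  · intro Q hQ γ
    have hcop : Pairwise (Function.onFun Nat.Coprime fun i : {x // x ∈ Q} => (i : ℕ)) := by
      intro i j hij
      exact (Nat.coprime_primes (hQ i i.2).1 (hQ j j.2).1).mpr
        (fun hh => hij (Subtype.ext hh))
    set e := ZMod.prodEquivPi (fun i : {x // x ∈ Q} => (i : ℕ)) hcop with he
    haveI : NeZero (∏ i : {x // x ∈ Q}, (i : ℕ)) := by
      refine ⟨Finset.prod_ne_zero_iff.mpr fun i _ => ?_⟩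
      exact (hQ i i.2).1.pos.ne'
    set fu : ∀ i : {x // x ∈ Q}, (ZMod (i : ℕ))ˣ := fun i =>
      if γ i = 0 then 1 else d (i : ℕ) (hQ i i.2) with hfu'
    set f : ∀ i : {x // x ∈ Q}, ZMod (i : ℕ) := fun i => ((fu i : (ZMod (i : ℕ))ˣ) : ZMod (i : ℕ))
      with hf
    have hfu : IsUnit f := by
      refine ⟨⟨f, fun i => (((fu i)⁻¹ : (ZMod (i : ℕ))ˣ) : ZMod (i : ℕ)),
        funext fun i => ?_, funext fun i => ?_⟩, rfl⟩
      · show ((fu i : (ZMod (i : ℕ))ˣ) : ZMod (i : ℕ)) * (((fu i)⁻¹ : (ZMod (i : ℕ))ˣ)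
          : ZMod (i : ℕ)) = 1
        rw [← Units.val_mul, mul_inv_cancel, Units.val_one]
      · show (((fu i)⁻¹ : (ZMod (i : ℕ))ˣ) : ZMod (i : ℕ)) * ((fu i : (ZMod (i : ℕ))ˣ)
          : ZMod (i : ℕ)) = 1
        rw [← Units.val_mul, inv_mul_cancel, Units.val_one]
    have hu : IsUnit (e.symm f) := hfu.map e.symm
    obtain ⟨p, hp12, hpp, hpa⟩ := Nat.forall_exists_prime_gt_and_eq_mod hu 12
    refine ⟨p, hpp, by omega, ?_⟩
    intro q hqQ
    have h : Nat.Prime q ∧ 7 ≤ q := hQ q hqQ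
    haveI : NeZero q := ⟨h.1.pos.ne'⟩
    have hcomp : (p : ZMod q) = f ⟨q, hqQ⟩ := by
      have h3 : e ((p : ℕ) : ZMod (∏ i : {x // x ∈ Q}, (i : ℕ)))
          = ((p : ℕ) : ∀ i : {x // x ∈ Q}, ZMod (i : ℕ)) := map_natCast e p
      have h4 : ((p : ℕ) : ∀ i : {x // x ∈ Q}, ZMod (i : ℕ)) = f := by
        rw [← h3, hpa, RingEquiv.apply_symm_apply]
      simpa using congrFun h4 ⟨q, hqQ⟩
    rcases fin_two_cases (γ q) with hγ | hγ
    · rw [hγ]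
      simp only [dif_pos h]
      rw [if_true, Nat.cast_zero]
      rw [hcomp]
      show ((fu ⟨q, hqQ⟩ : (ZMod q)ˣ) : ZMod q) ^ 4 - 1 = 0
      have : fu ⟨q, hqQ⟩ = 1 := by simp [hfu', hγ]
      rw [this]
      simp
    · rw [hγ]
      simp only [dif_pos h]
      rw [if_neg (by decide : ¬ ((1 : Fin 2) = 0))]
      rw [hcomp]
      show ((fu ⟨q, hqQ⟩ : (ZMod q)ˣ) : ZMod q) ^ 4 - 1
        = ((((((d q h) ^ 4 : (ZMod q)ˣ) : ZMod q) - 1).val : ℕ) : ZMod q)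
      have hfuq : fu ⟨q, hqQ⟩ = d q h := by
        simp only [hfu']
        rw [if_neg (by simp [hγ])]
      rw [hfuq, ZMod.natCast_val, ZMod.cast_id]
      push_cast
      ring
end

section
/- Let f(n) = n!/2 and let U ≠ V be two ultrafilters on ℕ (supported on integers ≥ 3). Then the pushforward ultrafilters f_*(U) and f_*(V) are not equivalent, where two nonprincipal ultrafilters W₁, W₂ are equivalent if there is a monotone κ : ℕ → ℕ with κ_*(W₁) = W₂ and lim_{n→W₁} κ(n)/n = 1. -/
open Filter

/-- Two nonprincipal ultrafilters `W₁, W₂` on `ℕ` are equivalent if there is a monotone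
map `κ : ℕ → ℕ` with `κ_*(W₁) = W₂` and `lim_{n → W₁} κ(n)/n = 1`. -/
def UltrafilterEquiv (U V : Ultrafilter ℕ) : Prop :=
  ∃ κ : ℕ → ℕ, Monotone κ ∧ Ultrafilter.map κ U = V ∧
    Filter.Tendsto (fun n => (κ n : ℝ) / (n : ℝ)) (U : Filter ℕ) (nhds 1)

private lemma fa_succ (n : ℕ) (h : 2 ≤ n) :
    Nat.factorial (n + 1) / 2 = (n + 1) * (Nat.factorial n / 2) := by
  rw [Nat.factorial_succ, Nat.mul_div_assoc _ (Nat.dvd_factorial (by norm_num) h)]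

private lemma fa_mono : Monotone (fun n => Nat.factorial n / 2) :=
  fun _ _ h => Nat.div_le_div_right (Nat.factorial_le h)

private lemma fa_ge (n : ℕ) (h : 3 ≤ n) : 3 ≤ Nat.factorial n / 2 := by
  calc 3 = Nat.factorial 3 / 2 := by decide
  _ ≤ _ := fa_mono h

private lemma fa_gap {m n : ℕ} (hm : 3 ≤ m) (hmn : m < n) :
    4 * (Nat.factorial m / 2) ≤ Nat.factorial n / 2 := by
  calc 4 * (Nat.factorial m / 2) ≤ (m + 1) * (Nat.factorial m / 2) :=
        Nat.mul_le_mul_right _ (by omega)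
  _ = Nat.factorial (m + 1) / 2 := (fa_succ m (by omega)).symm
  _ ≤ _ := fa_mono hmn

private lemma fa_inj {m n : ℕ} (hm : 3 ≤ m) (hn : 3 ≤ n)
    (h : Nat.factorial m / 2 = Nat.factorial n / 2) : m = n := by
  rcases lt_trichotomy m n with hlt | heq | hlt
  · have h1 := fa_gap hm hlt
    have h2 := fa_ge m hm
    omega
  · exact heq
  · have h1 := fa_gap hn hlt
    have h2 := fa_ge n hn
    omega

/-- Let `f(n) = n!/2`. If `U ≠ V` are ultrafilters on `ℕ` supported on `{n | n ≥ 3}`,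
then the pushforwards `f_*(U)` and `f_*(V)` are not equivalent. -/
theorem pushforward_factorial_not_equivalent (U V : Ultrafilter ℕ) (hUV : U ≠ V)
    (hU : {n : ℕ | 3 ≤ n} ∈ U) (hV : {n : ℕ | 3 ≤ n} ∈ V) :
    ¬ UltrafilterEquiv (Ultrafilter.map (fun n => Nat.factorial n / 2) U)
      (Ultrafilter.map (fun n => Nat.factorial n / 2) V) := by
  rintro ⟨κ, hκmono, hmap, hlim⟩
  set f : ℕ → ℕ := fun n => Nat.factorial n / 2 with hfdef
  -- filter-level version of hmap
  have hmap' : Filter.map κ (Filter.map f (U : Filter ℕ)) = Filter.map f (V : Filter ℕ) := by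
    have := congrArg (fun W : Ultrafilter ℕ => (W : Filter ℕ)) hmap
    simpa [Ultrafilter.coe_map] using this
  -- κ(f n) lands in the image of f on {m | 3 ≤ m}, U-often
  have himg : f '' {m | 3 ≤ m} ∈ Filter.map f (V : Filter ℕ) :=
    mem_map.2 (mem_of_superset hV fun n hn => ⟨n, hn, rfl⟩)
  have h1 : {n : ℕ | κ (f n) ∈ f '' {m | 3 ≤ m}} ∈ U := by
    have h := hmap' ▸ himg
    exact mem_map.1 (mem_map.1 h)
  -- the ratio bound
  have hlim' : Filter.Tendsto (fun n => (κ (f n) : ℝ) / (f n : ℝ)) (U : Filter ℕ) (nhds 1) := by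
    rw [Ultrafilter.coe_map, tendsto_map'_iff] at hlim
    exact hlim
  have hIoo : Set.Ioo (1 / 2 : ℝ) 2 ∈ nhds (1 : ℝ) := Ioo_mem_nhds (by norm_num) (by norm_num)
  have h2 : {n : ℕ | (κ (f n) : ℝ) / (f n : ℝ) ∈ Set.Ioo (1 / 2 : ℝ) 2} ∈ U :=
    mem_map.1 (hlim' hIoo)
  -- key: κ ∘ f = f, U-often
  have hkey : ∀ᶠ n in (U : Filter ℕ), κ (f n) = f n := by
    filter_upwards [hU, h1, h2] with n hn3 hn1 hn2
    obtain ⟨m, hm3, hmfn⟩ := hn1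
    have hfn3 : 3 ≤ f n := fa_ge n hn3
    have hfm3 : 3 ≤ f m := fa_ge m hm3
    have hfnpos : (0 : ℝ) < (f n : ℝ) := by exact_mod_cast Nat.lt_of_lt_of_le (by norm_num) hfn3
    obtain ⟨hlo, hhi⟩ := hn2
    rw [lt_div_iff₀ hfnpos] at hlo
    rw [div_lt_iff₀ hfnpos] at hhi
    have hlo' : (f n : ℕ) < 2 * κ (f n) := by
      have : (f n : ℝ) < 2 * (κ (f n) : ℝ) := by linarith
      exact_mod_cast this
    have hhi' : κ (f n) < 2 * f n := by exact_mod_cast hhi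
    rcases lt_trichotomy m n with hlt | heq | hlt
    · have hg : 4 * f m ≤ f n := fa_gap hm3 hlt
      omega
    · rw [heq] at hmfn; omega
    · have hg : 4 * f n ≤ f m := fa_gap hn3 hlt
      omega
  -- hence f_* U = f_* V at the filter level
  have hfmaps : Filter.map f (U : Filter ℕ) = Filter.map f (V : Filter ℕ) := by
    calc Filter.map f (U : Filter ℕ) = Filter.map (fun n => κ (f n)) (U : Filter ℕ) :=
          (Filter.map_congr hkey).symm
    _ = Filter.map κ (Filter.map f (U : Filter ℕ)) := (Filter.map_map).symm
    _ = Filter.map f (V : Filter ℕ) := hmap'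
  -- deduce U = V using injectivity of f on {n | 3 ≤ n}
  have hle : (U : Filter ℕ) ≤ (V : Filter ℕ) := by
    intro S hS
    have himg2 : f '' (S ∩ {m | 3 ≤ m}) ∈ Filter.map f (V : Filter ℕ) :=
      mem_map.2 (mem_of_superset (inter_mem hS hV) fun n hn => ⟨n, hn, rfl⟩)
    have hpre : {n : ℕ | f n ∈ f '' (S ∩ {m | 3 ≤ m})} ∈ U :=
      mem_map.1 (hfmaps ▸ himg2)
    filter_upwards [hpre, hU] with n hn hn3
    obtain ⟨m, ⟨hmS, hm3⟩, hfm⟩ := hn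
    have : m = n := fa_inj hm3 hn3 hfm
    exact this ▸ hmS
  exact hUV (Ultrafilter.coe_le_coe.1 hle)
end
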